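/- Assume the discrete energy E_h^n := ε²‖δ_t Ψ^{n−1}‖² + (|Ψⁿ|₁² + |Ψ^{n−1}|₁²)/2 + (‖Ψⁿ‖² + ‖Ψ^{n−1}‖²)/(2ε²) + ((VΨⁿ,Ψⁿ)+(VΨ^{n−1},Ψ^{n−1}))/2 + (λ/4)(‖Ψⁿ‖_{L⁴}⁴ + ‖Ψ^{n−1}‖_{L⁴}⁴) − (Ω²ε²/2)(‖L_zΨⁿ‖² + ‖L_zΨ^{n−1}‖²) is conserved: E_h^n = E_h^1. If λ > 0, ‖V‖_{L∞} ≤ C_V, ‖L_z ω‖ ≤ |ω|₁/C_{U₁} for all ω ∈ V_h, and ε satisfies Ω²ε²/(2C_{U₁}²) < 1/2 and C_V/2 < 1/(2ε²), then each term is controlled: in particular there is M > 0 depending only on |E_h^1| and the constants such that ‖Ψ^n‖_{1,h} ≤ M for all n. -/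
import Mathlib
set_option maxHeartbeats 1000000

lemma sq_coe_bound {x E c : ℝ} (hc : 0 < c) (hx : 0 ≤ x) (h : c * x^2 ≤ E) :
    x ≤ Real.sqrt (E / c) := by
  have h2 : x^2 ≤ E / c := (le_div_iff₀ hc).mpr (by linarith [mul_comm c (x^2)])
  calc x = Real.sqrt (x^2) := (Real.sqrt_sq hx).symm
    _ ≤ Real.sqrt (E / c) := Real.sqrt_le_sqrt h2

/-- Boundedness of the FEM solution from conservation of the discrete energy
(Theorem 2.3): if the discrete energy `E_h^n` is conserved, `λ > 0`,
`|(Vψ,ψ)| ≤ C_V ‖ψ‖²`, `‖L_z ω‖ ≤ |ω|₁/C_{U₁}`, and `ε` satisfies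
`Ω²ε²/(2C_{U₁}²) < 1/2`, `C_V/2 < 1/(2ε²)`, then `‖Ψⁿ‖_{1,h} ≤ M`. -/
theorem fem_solution_bounded {H : Type*} [NormedAddCommGroup H] [InnerProductSpace ℂ H]
    (s1 L4 Vq : H → ℝ) (Lz : H →ₗ[ℂ] H) (Ψ : ℕ → H)
    (τ lam Ω ε CV CU1 : ℝ)
    (hτ : 0 < τ) (hlam : 0 < lam) (hΩ : 0 < Ω) (hε : 0 < ε)
    (hCV : 0 < CV) (hCU1 : 0 < CU1)
    (hs1 : ∀ ψ, 0 ≤ s1 ψ) (hL4 : ∀ ψ, 0 ≤ L4 ψ)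
    (hV : ∀ ψ, |Vq ψ| ≤ CV * ‖ψ‖^2)
    (hLz : ∀ ψ, ‖Lz ψ‖ ≤ s1 ψ / CU1)
    (hε1 : Ω^2 * ε^2 / (2 * CU1^2) < 1/2)
    (hε2 : CV / 2 < 1 / (2 * ε^2))
    (Eh : ℕ → ℝ)
    (hEh : ∀ n, 1 ≤ n → Eh n =
      ε^2 * ‖(τ:ℂ)⁻¹ • (Ψ n - Ψ (n-1))‖^2
      + (s1 (Ψ n)^2 + s1 (Ψ (n-1))^2) / 2
      + (‖Ψ n‖^2 + ‖Ψ (n-1)‖^2) / (2 * ε^2)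
      + (Vq (Ψ n) + Vq (Ψ (n-1))) / 2
      + lam / 4 * (L4 (Ψ n)^4 + L4 (Ψ (n-1))^4)
      - Ω^2 * ε^2 / 2 * (‖Lz (Ψ n)‖^2 + ‖Lz (Ψ (n-1))‖^2))
    (hcons : ∀ n, 1 ≤ n → Eh n = Eh 1) :
    ∃ M > 0, ∀ n, ‖Ψ n‖ + s1 (Ψ n) ≤ M := by
  set α : ℝ := 1/2 - Ω^2 * ε^2 / (2 * CU1^2) with hαdef
  set β : ℝ := 1 / (2 * ε^2) - CV / 2 with hβdef
  have hαpos : 0 < α := by simp only [hαdef]; linarith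
  have hβpos : 0 < β := by simp only [hβdef]; linarith
  have key : ∀ ψ : H, (∃ n, 1 ≤ n ∧ (ψ = Ψ n ∨ ψ = Ψ (n-1))) →
      β * ‖ψ‖^2 + α * s1 ψ^2 ≤ Eh 1 := by
    rintro ψ ⟨n, hn, hψ⟩
    have hexpr := (hEh n hn).symm.trans (hcons n hn)
    set a := Ψ n
    set b := Ψ (n-1)
    have hLza : ‖Lz a‖^2 ≤ s1 a^2 / CU1^2 := by
      calc ‖Lz a‖^2 ≤ (s1 a / CU1)^2 := pow_le_pow_left₀ (norm_nonneg _) (hLz a) 2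
        _ = s1 a^2 / CU1^2 := by ring
    have hLzb : ‖Lz b‖^2 ≤ s1 b^2 / CU1^2 := by
      calc ‖Lz b‖^2 ≤ (s1 b / CU1)^2 := pow_le_pow_left₀ (norm_nonneg _) (hLz b) 2
        _ = s1 b^2 / CU1^2 := by ring
    have hVa : -(CV * ‖a‖^2) ≤ Vq a := neg_le_of_abs_le (hV a)
    have hVb : -(CV * ‖b‖^2) ≤ Vq b := neg_le_of_abs_le (hV b)
    have hT1 : (0:ℝ) ≤ ε^2 * ‖(τ:ℂ)⁻¹ • (a - b)‖^2 := by positivity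
    have hT2 : (0:ℝ) ≤ lam / 4 * (L4 a^4 + L4 b^4) := by positivity
    have hsum : β * (‖a‖^2 + ‖b‖^2) + α * (s1 a^2 + s1 b^2) ≤ Eh 1 := by
      rw [← hexpr]
      have hΩε : (0:ℝ) ≤ Ω^2 * ε^2 / 2 := by positivity
      have hA : Ω^2 * ε^2 / 2 * (‖Lz a‖^2 + ‖Lz b‖^2)
          ≤ Ω^2 * ε^2 / (2 * CU1^2) * (s1 a^2 + s1 b^2) := by
        calc Ω^2 * ε^2 / 2 * (‖Lz a‖^2 + ‖Lz b‖^2)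
            ≤ Ω^2 * ε^2 / 2 * (s1 a^2 / CU1^2 + s1 b^2 / CU1^2) :=
              mul_le_mul_of_nonneg_left (by linarith) hΩε
          _ = Ω^2 * ε^2 / (2 * CU1^2) * (s1 a^2 + s1 b^2) := by
              field_simp
      have hB : β * (‖a‖^2 + ‖b‖^2)
          = (‖a‖^2 + ‖b‖^2) / (2 * ε^2) - CV / 2 * (‖a‖^2 + ‖b‖^2) := by
        simp only [hβdef]; ring
      have hC : α * (s1 a^2 + s1 b^2)
          = (s1 a^2 + s1 b^2) / 2 - Ω^2 * ε^2 / (2 * CU1^2) * (s1 a^2 + s1 b^2) := by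
        simp only [hαdef]; ring
      rw [hB, hC]
      linarith
    have hbnn : (0:ℝ) ≤ β * ‖b‖^2 + α * s1 b^2 := by positivity
    have hann : (0:ℝ) ≤ β * ‖a‖^2 + α * s1 a^2 := by positivity
    rcases hψ with h | h <;> subst h <;> nlinarith [hsum]
  have hE0 : (0:ℝ) ≤ Eh 1 := by
    have h := key (Ψ 1) ⟨1, le_refl 1, Or.inl rfl⟩
    have : (0:ℝ) ≤ β * ‖Ψ 1‖^2 + α * s1 (Ψ 1)^2 := by positivity
    linarith
  refine ⟨Real.sqrt (Eh 1 / β) + Real.sqrt (Eh 1 / α) + 1, by positivity, ?_⟩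
  intro n
  have hk : β * ‖Ψ n‖^2 + α * s1 (Ψ n)^2 ≤ Eh 1 := by
    rcases Nat.eq_zero_or_pos n with h0 | hpos
    · subst h0
      exact key (Ψ 0) ⟨1, le_refl 1, Or.inr rfl⟩
    · exact key (Ψ n) ⟨n, hpos, Or.inl rfl⟩
  have h1 : ‖Ψ n‖ ≤ Real.sqrt (Eh 1 / β) :=
    sq_coe_bound hβpos (norm_nonneg _) (by nlinarith [sq_nonneg (s1 (Ψ n))])
  have h2 : s1 (Ψ n) ≤ Real.sqrt (Eh 1 / α) :=
    sq_coe_bound hαpos (hs1 _) (by nlinarith [sq_nonneg ‖Ψ n‖])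
  linarith
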